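/- Let D be a quasi-symmetric 2-(q³, q²(q−1)/2, q(q³−q²−2)/4) design of Blokhuis-Haemers type (q a power of 2, q ≥ 4, block intersection numbers x = q²(q−2)/4, y = q²(q−1)/4), and let G be an automorphism group acting with f fixed points, h fixed blocks, and all other orbits of size 2. Then the binary code spanned by the columns of the non-fixed part of the point orbit matrix is doubly even and self-orthogonal. -/

import Mathlib

/-!
Reduced mod 2, the entry of the column of a block orbit `{a, a'}` at a point orbit is `1`
exactly when the representative lies in `D = B a ∆ B a'`. This set is `G`-invariant and contains
no fixed point, so it is a union of orbits of size 2 and `|D|` is twice the weight of the column.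
As `8 ∣ k` and `4 ∣ x, y`, `|D| = 2k - 2|B a ∩ B a'|` is divisible by 8: the column is doubly even.
Likewise the inner product of the columns of `{a, a'}` and `{e, e'}` is `|D ∩ D'| / 2` mod 2.
Inclusion–exclusion writes `|D ∩ D'|` as a sum of block intersections (divisible by 4), minus
twice `|D ∩ B e ∩ B e'|` (even, by the same orbit count) and twice
`|B a ∩ B a' ∩ B e| + |B a ∩ B a' ∩ B e'|`, whose terms are equal because an element of `G`
mapping `e` to `e'` preserves `B a ∩ B a'`. Finally, pairwise orthogonal doubly even words span
a doubly even self-orthogonal binary code.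
-/

open Finset symmDiff

namespace Finset

variable {α : Type*} [DecidableEq α]

theorem card_symmDiff_add_two_mul_card_inter (s t : Finset α) :
    #(s ∆ t) + 2 * #(s ∩ t) = #s + #t := by
  have := card_sdiff_add_card_inter s t
  have := card_sdiff_add_card_inter t s
  rw [Finset.symmDiff_def, card_union_of_disjoint disjoint_sdiff_sdiff, inter_comm t s] at *
  omega

theorem card_symmDiff_inter_symmDiff (s s' t t' : Finset α) :
    #((s ∆ s') ∩ (t ∆ t')) + 2 * #((s ∆ s') ∩ (t ∩ t')) + 2 * #(s ∩ s' ∩ t) +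
      2 * #(s ∩ s' ∩ t') = #(s ∩ t) + #(s' ∩ t) + #(s ∩ t') + #(s' ∩ t') := by
  have h := card_symmDiff_add_two_mul_card_inter ((s ∆ s') ∩ t) ((s ∆ s') ∩ t')
  have ht := card_symmDiff_add_two_mul_card_inter (s ∩ t) (s' ∩ t)
  have ht' := card_symmDiff_add_two_mul_card_inter (s ∩ t') (s' ∩ t')
  simp only [← inf_eq_inter] at *
  rw [← inf_symmDiff_distrib_left, ← inf_inf_distrib_left] at h
  rw [← inf_symmDiff_distrib_right, ← inf_inf_distrib_right] at ht ht'
  omega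

end Finset

section BinaryCode

variable {ι : Type*} [Fintype ι]

theorem dotProduct_eq_zero_of_mem_span {R : Type*} [CommRing R] {s : Set (ι → R)}
    (hs : ∀ v ∈ s, ∀ w ∈ s, v ⬝ᵥ w = 0) {u w : ι → R}
    (hu : u ∈ Submodule.span R s) (hw : w ∈ Submodule.span R s) : u ⬝ᵥ w = 0 := by
  have key : ∀ w', (∀ v ∈ s, v ⬝ᵥ w' = 0) → ∀ u' ∈ Submodule.span R s, u' ⬝ᵥ w' = 0 := by
    intro w' hw' u' hu'
    induction hu' using Submodule.span_induction with
    | mem v hv => exact hw' v hv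
    | zero => exact zero_dotProduct w'
    | add x y _ _ hx hy => rw [add_dotProduct, hx, hy, add_zero]
    | smul c x _ hx => rw [smul_dotProduct, hx, smul_zero]
  refine key w (fun v hv => ?_) u hu
  rw [dotProduct_comm]
  exact key v (fun v' hv' => hs v' hv' v hv) w hw

theorem dotProduct_eq_card_filter (u w : ι → ZMod 2) :
    u ⬝ᵥ w = (#{i | u i ≠ 0 ∧ w i ≠ 0} : ZMod 2) := by
  have key : ∀ a b : ZMod 2, a * b = if a ≠ 0 ∧ b ≠ 0 then 1 else 0 := by decide
  rw [natCast_card_filter]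
  exact sum_congr rfl fun i _ => key (u i) (w i)

theorem hammingNorm_add_add_two_mul (u w : ι → ZMod 2) :
    hammingNorm (u + w) + 2 * #{i | u i ≠ 0 ∧ w i ≠ 0} = hammingNorm u + hammingNorm w := by
  simp only [hammingNorm, card_filter, mul_sum, ← sum_add_distrib, Pi.add_apply]
  have key : ∀ a b : ZMod 2, ((if a + b ≠ 0 then 1 else 0) +
      2 * if a ≠ 0 ∧ b ≠ 0 then 1 else 0) = (if a ≠ 0 then 1 else 0) + if b ≠ 0 then 1 else 0 := by
    decide
  exact sum_congr rfl fun i _ => key (u i) (w i)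

theorem dotProduct_self_eq_zero_of_two_dvd {v : ι → ZMod 2} (hv : 2 ∣ hammingNorm v) :
    v ⬝ᵥ v = 0 := by
  rw [dotProduct_eq_card_filter, ZMod.natCast_eq_zero_iff_even]
  simp only [and_self]
  exact even_iff_two_dvd.mpr hv

theorem four_dvd_hammingNorm_of_mem_span {s : Set (ι → ZMod 2)}
    (hw : ∀ v ∈ s, 4 ∣ hammingNorm v) (ho : ∀ v ∈ s, ∀ w ∈ s, v ⬝ᵥ w = 0) {u : ι → ZMod 2}
    (hu : u ∈ Submodule.span (ZMod 2) s) : 4 ∣ hammingNorm u := by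
  induction hu using Submodule.span_induction with
  | mem v hv => exact hw v hv
  | zero => simp
  | add x y hx hy ihx ihy =>
    have hxy := dotProduct_eq_zero_of_mem_span ho hx hy
    rw [dotProduct_eq_card_filter, ZMod.natCast_eq_zero_iff_even, even_iff_two_dvd] at hxy
    have := hammingNorm_add_add_two_mul x y
    omega
  | smul c x _ ih =>
    rcases (by decide : ∀ c : ZMod 2, c = 0 ∨ c = 1) c with rfl | rfl <;> simp [ih]

theorem four_dvd_hammingNorm_and_dotProduct_eq_zero_of_mem_span {s : Set (ι → ZMod 2)}
    (hw : ∀ v ∈ s, 4 ∣ hammingNorm v) (ho : ∀ v ∈ s, ∀ w ∈ s, v ≠ w → v ⬝ᵥ w = 0) :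
    (∀ u ∈ Submodule.span (ZMod 2) s, 4 ∣ hammingNorm u) ∧
      ∀ u ∈ Submodule.span (ZMod 2) s, ∀ w ∈ Submodule.span (ZMod 2) s, u ⬝ᵥ w = 0 := by
  have ho' : ∀ v ∈ s, ∀ w ∈ s, v ⬝ᵥ w = 0 := fun v hv w hw' => by
    obtain rfl | hne := eq_or_ne v w
    · exact dotProduct_self_eq_zero_of_two_dvd ((by norm_num : 2 ∣ 4).trans (hw v hv))
    · exact ho v hv w hw' hne
  exact ⟨fun u hu => four_dvd_hammingNorm_of_mem_span hw ho' hu,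
    fun u hu w hw => dotProduct_eq_zero_of_mem_span ho' hu hw⟩

end BinaryCode

section OrbitCounting

variable {G α : Type*} [Group G] [MulAction G α]

variable (G) in
def IsOrbit (O : Finset α) : Prop :=
  ∃ x, ∀ p, p ∈ O ↔ p ∈ MulAction.orbit G x

variable (G) in
def IsSMulInvariant (S : Finset α) : Prop :=
  ∀ (g : G) (p : α), g • p ∈ S ↔ p ∈ S

theorem IsSMulInvariant.inter [DecidableEq α] {S S' : Finset α} (hS : IsSMulInvariant G S)
    (hS' : IsSMulInvariant G S') : IsSMulInvariant G (S ∩ S') := fun g p => by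
  simp only [mem_inter, hS g p, hS' g p]

namespace IsOrbit

variable {O : Finset α} {p p' : α}

theorem exists_smul_eq (hO : IsOrbit G O) (hp : p ∈ O) (hp' : p' ∈ O) : ∃ g : G, g • p = p' := by
  obtain ⟨x, hx⟩ := hO
  rw [hx, ← MulAction.orbit_eq_iff.mpr ((hx p).mp hp)] at hp'
  exact hp'

theorem isSMulInvariant (hO : IsOrbit G O) : IsSMulInvariant G O := fun g p => by
  obtain ⟨x, hx⟩ := hO
  rw [hx, hx, ← MulAction.orbit_eq_iff, MulAction.orbit_smul, MulAction.orbit_eq_iff]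

theorem smul_eq_self_of_card_eq_one (hO : IsOrbit G O) (h1 : #O = 1) (hp : p ∈ O) (g : G) :
    g • p = p := by
  obtain ⟨y, rfl⟩ := card_eq_one.mp h1
  rw [mem_singleton] at hp
  subst hp
  exact mem_singleton.mp ((hO.isSMulInvariant g p).mpr (mem_singleton_self p))

theorem mem_iff_of_isSMulInvariant (hO : IsOrbit G O) {S : Finset α} (hS : IsSMulInvariant G S)
    (hp : p ∈ O) (hp' : p' ∈ O) : p ∈ S ↔ p' ∈ S := by
  obtain ⟨g, rfl⟩ := hO.exists_smul_eq hp hp'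
  exact (hS g p).symm

end IsOrbit

theorem card_eq_of_smul_mem_iff {U V : Finset α} (g : G) (h : ∀ x, g • x ∈ V ↔ x ∈ U) :
    #V = #U :=
  card_nbij' (g⁻¹ • ·) (g • ·) (fun x hx => (h _).mp (by rwa [smul_inv_smul]))
    (fun x hx => (h x).mpr hx) (fun x _ => smul_inv_smul g x) (fun x _ => inv_smul_smul g x)

variable (G) in
structure IsOrbitPartition {ι : Type*} (O : ι → Finset α) : Prop where
  isOrbit : ∀ i, IsOrbit G (O i)
  cover : ∀ p, ∃ i, p ∈ O i
  disjoint : ∀ i i', i ≠ i' → Disjoint (O i) (O i')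

theorem IsOrbitPartition.card_eq_two_mul [DecidableEq α] {ι : Type*} [Fintype ι]
    {O : ι → Finset α} (hO : IsOrbitPartition G O) (hsize : ∀ i, #(O i) = 1 ∨ #(O i) = 2)
    {rep : ι → α} (hrep : ∀ i, rep i ∈ O i) {S : Finset α} (hS : IsSMulInvariant G S)
    (hfix : ∀ p, (∀ g : G, g • p = p) → p ∉ S) :
    #S = 2 * #{i : {i // #(O i) = 2} | rep i ∈ S} := by
  have hS_eq : S = ({i : {i // #(O i) = 2} | rep i ∈ S} : Finset _).biUnion (O ·) := by
    ext p
    simp only [mem_biUnion, mem_filter, mem_univ, true_and]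
    constructor
    · intro hp
      obtain ⟨i, hpi⟩ := hO.cover p
      have h2 : #(O i) = 2 := (hsize i).resolve_left fun h1 =>
        hfix p ((hO.isOrbit i).smul_eq_self_of_card_eq_one h1 hpi) hp
      exact ⟨⟨i, h2⟩, ((hO.isOrbit i).mem_iff_of_isSMulInvariant hS hpi (hrep i)).mp hp, hpi⟩
    · rintro ⟨i, hi, hpi⟩
      exact ((hO.isOrbit i).mem_iff_of_isSMulInvariant hS (hrep i) hpi).mp hi
  nth_rw 1 [hS_eq]
  rw [card_biUnion fun i _ j _ hij => hO.disjoint _ _ (Subtype.coe_injective.ne hij),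
    sum_congr rfl fun i _ => i.2, sum_const, smul_eq_mul, mul_comm]

end OrbitCounting

section Incidence

variable {G α β : Type*} [Group G] [MulAction G α] [MulAction G β] [DecidableEq α]
  {B : β → Finset α}

variable (G B) in
def PreservesIncidence : Prop :=
  ∀ (g : G) (c : β) (p : α), g • p ∈ B (g • c) ↔ p ∈ B c

variable (B) in
/-- The paper's `γ_{ij}`, for `T` the block orbit `B_j` and `p` a representative of `P_i`. -/
def blockCount (T : Finset β) (p : α) : ℕ := #{c ∈ T | p ∈ B c}

theorem card_inter_smul (hB : PreservesIncidence G B) {S : Finset α}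
    (hS : IsSMulInvariant G S) (g : G) (c : β) : #(S ∩ B (g • c)) = #(S ∩ B c) :=
  card_eq_of_smul_mem_iff g fun p => by simp only [mem_inter, hS g p, hB g c p]

theorem odd_blockCount_pair_iff [DecidableEq β] {a a' : β} (h : a ≠ a') {p : α} :
    Odd (blockCount B {a, a'} p) ↔ p ∈ B a ∆ B a' := by
  unfold blockCount
  rw [filter_insert, filter_singleton]
  by_cases h1 : p ∈ B a <;> by_cases h2 : p ∈ B a' <;> simp [h1, h2, mem_symmDiff, h]

theorem blockCount_pair_eq_two_iff [DecidableEq β] {a a' : β} (h : a ≠ a') {p : α} :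
    blockCount B {a, a'} p = 2 ↔ p ∈ B a ∩ B a' := by
  unfold blockCount
  rw [filter_insert, filter_singleton]
  by_cases h1 : p ∈ B a <;> by_cases h2 : p ∈ B a' <;> simp [h1, h2, h]

namespace IsOrbit

variable {T : Finset β}

theorem blockCount_smul (hT : IsOrbit G T) (hB : PreservesIncidence G B) (g : G) (p : α) :
    blockCount B T (g • p) = blockCount B T p :=
  card_eq_of_smul_mem_iff g fun c => by
    simp only [mem_filter]
    exact and_congr (hT.isSMulInvariant g c) (hB g c p)

theorem blockCount_eq_zero_or_eq_card (hT : IsOrbit G T) (hB : PreservesIncidence G B) {p : α}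
    (hp : ∀ g : G, g • p = p) : blockCount B T p = 0 ∨ blockCount B T p = #T := by
  by_cases h : ∃ c ∈ T, p ∈ B c
  · obtain ⟨c, hc, hpc⟩ := h
    refine .inr (congrArg card (filter_true_of_mem fun c' hc' => ?_))
    obtain ⟨g, rfl⟩ := hT.exists_smul_eq hc hc'
    rw [← hp g, hB g c p]
    exact hpc
  · exact .inl (card_eq_zero.mpr (filter_false_of_mem fun c hc hpc => h ⟨c, hc, hpc⟩))

variable [DecidableEq β] {a a' : β}

theorem isSMulInvariant_symmDiff (hT : IsOrbit G {a, a'}) (hB : PreservesIncidence G B)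
    (h : a ≠ a') : IsSMulInvariant G (B a ∆ B a') := fun g p => by
  rw [← odd_blockCount_pair_iff h, ← odd_blockCount_pair_iff h, hT.blockCount_smul hB]

theorem isSMulInvariant_inter (hT : IsOrbit G {a, a'}) (hB : PreservesIncidence G B)
    (h : a ≠ a') : IsSMulInvariant G (B a ∩ B a') := fun g p => by
  rw [← blockCount_pair_eq_two_iff h, ← blockCount_pair_eq_two_iff h, hT.blockCount_smul hB]

theorem notMem_symmDiff_of_forall_smul_eq (hT : IsOrbit G {a, a'}) (hB : PreservesIncidence G B)
    (h : a ≠ a') {p : α} (hp : ∀ g : G, g • p = p) : p ∉ B a ∆ B a' := by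
  rw [← odd_blockCount_pair_iff h]
  rcases hT.blockCount_eq_zero_or_eq_card hB hp with h0 | h2
  · simp [h0]
  · rw [h2, card_pair h]
    decide

end IsOrbit

end Incidence

section OrbitMatrix

variable {G α β ι : Type*} [Group G] [MulAction G α] [MulAction G β] [DecidableEq α]
  [DecidableEq β] {B : β → Finset α} {O : ι → Finset α} {rep : ι → α} {a a' e e' : β}

variable (B O rep) in
def orbitColumn (T : Finset β) (i : {i // #(O i) = 2}) : ZMod 2 := blockCount B T (rep i)

theorem orbitColumn_pair_ne_zero_iff (h : a ≠ a') (i : {i // #(O i) = 2}) :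
    orbitColumn B O rep {a, a'} i ≠ 0 ↔ rep i ∈ B a ∆ B a' :=
  ZMod.natCast_ne_zero_iff_odd.trans (odd_blockCount_pair_iff h)

variable [Fintype ι]

theorem hammingNorm_orbitColumn_pair (h : a ≠ a') :
    hammingNorm (orbitColumn B O rep {a, a'}) =
      #{i : {i // #(O i) = 2} | rep i ∈ B a ∆ B a'} := by
  simp only [hammingNorm, orbitColumn_pair_ne_zero_iff h]

theorem orbitColumn_pair_dotProduct (h : a ≠ a') (h' : e ≠ e') :
    orbitColumn B O rep {a, a'} ⬝ᵥ orbitColumn B O rep {e, e'} =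
      (#{i : {i // #(O i) = 2} | rep i ∈ (B a ∆ B a') ∩ (B e ∆ B e')} : ZMod 2) := by
  simp only [dotProduct_eq_card_filter, orbitColumn_pair_ne_zero_iff h,
    orbitColumn_pair_ne_zero_iff h', mem_inter]

variable {T T' : Finset β}

theorem four_dvd_hammingNorm_orbitColumn (hB : PreservesIncidence G B)
    (hO : IsOrbitPartition G O) (hsize : ∀ i, #(O i) = 1 ∨ #(O i) = 2)
    (hrep : ∀ i, rep i ∈ O i) (hT : IsOrbit G T) (hT2 : #T = 2)
    (hk : ∀ c ∈ T, 8 ∣ #(B c)) (hx : ∀ c ∈ T, ∀ c' ∈ T, c ≠ c' → 4 ∣ #(B c ∩ B c')) :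
    4 ∣ hammingNorm (orbitColumn B O rep T) := by
  obtain ⟨a, a', h, rfl⟩ := card_eq_two.mp hT2
  have hD := hO.card_eq_two_mul hsize hrep (hT.isSMulInvariant_symmDiff hB h)
    fun p hp => hT.notMem_symmDiff_of_forall_smul_eq hB h hp
  have := card_symmDiff_add_two_mul_card_inter (B a) (B a')
  have := hk a (by simp)
  have := hk a' (by simp)
  have := hx a (by simp) a' (by simp) h
  rw [hammingNorm_orbitColumn_pair h]
  omega

theorem orbitColumn_dotProduct_eq_zero (hB : PreservesIncidence G B)
    (hO : IsOrbitPartition G O) (hsize : ∀ i, #(O i) = 1 ∨ #(O i) = 2)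
    (hrep : ∀ i, rep i ∈ O i) (hT : IsOrbit G T) (hT2 : #T = 2) (hT' : IsOrbit G T')
    (hT2' : #T' = 2) (hx : ∀ c ∈ T, ∀ c' ∈ T', 4 ∣ #(B c ∩ B c')) :
    orbitColumn B O rep T ⬝ᵥ orbitColumn B O rep T' = 0 := by
  obtain ⟨a, a', h, rfl⟩ := card_eq_two.mp hT2
  obtain ⟨e, e', h', rfl⟩ := card_eq_two.mp hT2'
  rw [orbitColumn_pair_dotProduct h h', ZMod.natCast_eq_zero_iff_even, even_iff_two_dvd]
  have hD := hT.isSMulInvariant_symmDiff hB h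
  have hDD' := hO.card_eq_two_mul hsize hrep (hD.inter (hT'.isSMulInvariant_symmDiff hB h'))
    fun p hp hpD => hT.notMem_symmDiff_of_forall_smul_eq hB h hp (mem_inter.mp hpD).1
  have hDI' := hO.card_eq_two_mul hsize hrep (hD.inter (hT'.isSMulInvariant_inter hB h'))
    fun p hp hpD => hT.notMem_symmDiff_of_forall_smul_eq hB h hp (mem_inter.mp hpD).1
  have hI : #(B a ∩ B a' ∩ B e') = #(B a ∩ B a' ∩ B e) := by
    obtain ⟨g, rfl⟩ := hT'.exists_smul_eq (mem_insert_self e {e'})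
      (mem_insert_of_mem (mem_singleton_self _))
    exact card_inter_smul hB (hT.isSMulInvariant_inter hB h) g e
  have := card_symmDiff_inter_symmDiff (B a) (B a') (B e) (B e')
  have := hx a (by simp) e (by simp)
  have := hx a (by simp) e' (by simp)
  have := hx a' (by simp) e (by simp)
  have := hx a' (by simp) e' (by simp)
  omega

end OrbitMatrix

theorem stmt15_general (mq q b m n : ℕ) (hm : 2 ≤ mq) (hq : q = 2 ^ mq)
    (B : Fin b → Finset (Fin (q ^ 3)))
    (hk : ∀ a, (B a).card = q ^ 2 * (q - 1) / 2)
    (hqs : ∀ a a', a ≠ a' →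
      (B a ∩ B a').card = q ^ 2 * (q - 2) / 4 ∨
        (B a ∩ B a').card = q ^ 2 * (q - 1) / 4)
    (G : Subgroup (Equiv.Perm (Fin (q ^ 3))))
    (σ : G →* Equiv.Perm (Fin b))
    (hσ : ∀ (g : G) (a : Fin b),
      B (σ g a) = (B a).image (g : Equiv.Perm (Fin (q ^ 3))))
    (PO : Fin m → Finset (Fin (q ^ 3)))
    (hPOorb : ∀ i, ∃ pt, ∀ p, p ∈ PO i ↔ ∃ g : G, (g : Equiv.Perm (Fin (q ^ 3))) pt = p)
    (hPOcov : ∀ pt, ∃ i, pt ∈ PO i)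
    (hPOdisj : ∀ i i', i ≠ i' → Disjoint (PO i) (PO i'))
    (hPOsize : ∀ i, (PO i).card = 1 ∨ (PO i).card = 2)
    (BO : Fin n → Finset (Fin b))
    (hBOorb : ∀ j, ∃ a, ∀ c, c ∈ BO j ↔ ∃ g : G, σ g a = c)
    (hBOdisj : ∀ j j', j ≠ j' → Disjoint (BO j) (BO j'))
    (rep : Fin m → Fin (q ^ 3)) (hrep : ∀ i, rep i ∈ PO i)
    (colNF : {j : Fin n // (BO j).card = 2} →
      ({i : Fin m // (PO i).card = 2} → ZMod 2))
    (hcol : ∀ j i, colNF j i =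
      (((BO j.1).filter (fun a => rep i.1 ∈ B a)).card : ZMod 2)) :
    (∀ u ∈ Submodule.span (ZMod 2) (Set.range colNF), 4 ∣ hammingNorm u) ∧
    (∀ u ∈ Submodule.span (ZMod 2) (Set.range colNF),
      ∀ w ∈ Submodule.span (ZMod 2) (Set.range colNF), ∑ i, u i * w i = 0) := by
  let : MulAction G (Fin b) := MulAction.compHom _ σ
  have hB : PreservesIncidence G B := fun g c p => by
    rw [show g • c = σ g c from rfl, hσ]
    exact (Equiv.injective _).mem_finset_image
  have hPO : IsOrbitPartition G PO := ⟨hPOorb, hPOcov, hPOdisj⟩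
  have hq4 : 4 ∣ q := hq ▸ pow_dvd_pow 2 hm
  -- `4 ∣ q` gives `16 ∣ q ^ 2 * c`, hence `8 ∣ q ^ 2 * c / 2` and `4 ∣ q ^ 2 * c / 4`.
  have hk8 : ∀ a, 8 ∣ #(B a) := fun a =>
    hk a ▸ Nat.dvd_div_of_mul_dvd ((pow_dvd_pow_of_dvd hq4 2).mul_right _)
  have hx4 : ∀ a a', a ≠ a' → 4 ∣ #(B a ∩ B a') := fun a a' h => by
    rcases hqs a a' h with hx | hx <;>
      exact hx ▸ Nat.dvd_div_of_mul_dvd ((pow_dvd_pow_of_dvd hq4 2).mul_right _)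
  have hcolNF : ∀ j, colNF j = orbitColumn B PO rep (BO j) := fun j => funext (hcol j)
  refine four_dvd_hammingNorm_and_dotProduct_eq_zero_of_mem_span ?_ ?_
  · rintro _ ⟨j, rfl⟩
    rw [hcolNF]
    exact four_dvd_hammingNorm_orbitColumn hB hPO hPOsize hrep (hBOorb j) j.2
      (fun c _ => hk8 c) fun c _ c' _ => hx4 c c'
  · rintro _ ⟨j, rfl⟩ _ ⟨j', rfl⟩ hne
    have hdisj := hBOdisj j j' fun h => hne (by rw [Subtype.ext h])
    rw [hcolNF, hcolNF]
    exact orbitColumn_dotProduct_eq_zero hB hPO hPOsize hrep (hBOorb j) j.2 (hBOorb j') j'.2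
      fun c hc c' hc' => hx4 c c' (ne_of_mem_of_not_mem hc' (disjoint_left.mp hdisj hc)).symm

/-- Let `D` be a quasi-symmetric 2-(q³, q²(q−1)/2, q(q³−q²−2)/4) design of
Blokhuis–Haemers type (q a power of 2, q ≥ 4, block intersection numbers
x = q²(q−2)/4 and y = q²(q−1)/4), and let `G` be an automorphism group acting with
some fixed points, some fixed blocks and all other orbits of size 2. Then the binary
code spanned by the columns of the non-fixed part of the point orbit matrix is
doubly even and self-orthogonal. -/
theorem stmt15 (mq q b m n : ℕ) (hm : 2 ≤ mq) (hq : q = 2 ^ mq)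
    (B : Fin b → Finset (Fin (q ^ 3)))
    (hk : ∀ a, (B a).card = q ^ 2 * (q - 1) / 2)
    (hlam : ∀ p p' : Fin (q ^ 3), p ≠ p' →
      (Finset.univ.filter (fun a => p ∈ B a ∧ p' ∈ B a)).card =
        q * (q ^ 3 - q ^ 2 - 2) / 4)
    (hqs : ∀ a a', a ≠ a' →
      (B a ∩ B a').card = q ^ 2 * (q - 2) / 4 ∨
        (B a ∩ B a').card = q ^ 2 * (q - 1) / 4)
    (G : Subgroup (Equiv.Perm (Fin (q ^ 3))))
    (σ : G →* Equiv.Perm (Fin b))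
    (hσ : ∀ (g : G) (a : Fin b),
      B (σ g a) = (B a).image (g : Equiv.Perm (Fin (q ^ 3))))
    (PO : Fin m → Finset (Fin (q ^ 3)))
    (hPOorb : ∀ i, ∃ pt, ∀ p, p ∈ PO i ↔ ∃ g : G, (g : Equiv.Perm (Fin (q ^ 3))) pt = p)
    (hPOcov : ∀ pt, ∃ i, pt ∈ PO i)
    (hPOdisj : ∀ i i', i ≠ i' → Disjoint (PO i) (PO i'))
    (hPOsize : ∀ i, (PO i).card = 1 ∨ (PO i).card = 2)
    (BO : Fin n → Finset (Fin b))
    (hBOorb : ∀ j, ∃ a, ∀ c, c ∈ BO j ↔ ∃ g : G, σ g a = c)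
    (hBOcov : ∀ a, ∃ j, a ∈ BO j)
    (hBOdisj : ∀ j j', j ≠ j' → Disjoint (BO j) (BO j'))
    (hBOsize : ∀ j, (BO j).card = 1 ∨ (BO j).card = 2)
    (rep : Fin m → Fin (q ^ 3)) (hrep : ∀ i, rep i ∈ PO i)
    (colNF : {j : Fin n // (BO j).card = 2} →
      ({i : Fin m // (PO i).card = 2} → ZMod 2))
    (hcol : ∀ j i, colNF j i =
      (((BO j.1).filter (fun a => rep i.1 ∈ B a)).card : ZMod 2)) :
    (∀ u ∈ Submodule.span (ZMod 2) (Set.range colNF), 4 ∣ hammingNorm u) ∧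
    (∀ u ∈ Submodule.span (ZMod 2) (Set.range colNF),
      ∀ w ∈ Submodule.span (ZMod 2) (Set.range colNF), ∑ i, u i * w i = 0) :=
  stmt15_general mq q b m n hm hq B hk hqs G σ hσ PO hPOorb hPOcov hPOdisj hPOsize BO hBOorb hBOdisj
    rep hrep colNF hcol
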